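/- Let f : ℝⁿ → ℝ ∪ {+∞} be proper and prox-bounded with constant c > 0, i.e. the function x ↦ f(x) + ‖x‖²/(2c) is bounded below. Then for every r ∈ (0, c), the Moreau envelope e_r f has the descent property on ℝⁿ with constant L = 1/r: e_r f(y) ≤ e_r f(x) + d(e_r f)(x)(y − x) + (1/(2r))‖y − x‖² for all x, y ∈ ℝⁿ. -/

import Mathlib

/-!
For each `p` with `f p` finite, `u ↦ ‖u - p‖² / (2r) + f p` differs from `‖u‖² / (2r)` by an
affine function, i.e. it is `(-1/r)`-strongly concave. Properness and prox-boundedness with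
`r < c` make the infimum `e_r f` of these functions finite, and a finite infimum of
`(-1/r)`-strongly concave functions is again `(-1/r)`-strongly concave. Such a function `φ` is
continuous, and strong concavity along the chord from `x` to `x + w'` bounds
`(φ (x + t w') - φ x) / t` from below by `φ (x + w') - φ x - (1 - t) ‖w'‖² / (2r)`; letting
`t ↓ 0` and `w' → y - x` gives the descent inequality.
-/

open Filter Topology Set

/-- The subderivative `df(x̄)(w) := liminf_{t↓0, w'→w} (f(x̄ + t w') − f(x̄))/t`
of an extended-real-valued function. -/
noncomputable def subderiv {n : ℕ} (f : EuclideanSpace ℝ (Fin n) → EReal)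
    (x w : EuclideanSpace ℝ (Fin n)) : EReal :=
  Filter.liminf
    (fun p : ℝ × EuclideanSpace ℝ (Fin n) =>
      (((p.1)⁻¹ : ℝ) : EReal) * (f (x + p.1 • p.2) - f x))
    ((𝓝[>] (0:ℝ)) ×ˢ 𝓝 w)

/-- `F` is semi-differentiable at `x` for the direction `w` with semi-derivative `d`:
`d = lim_{t↓0, w'→w} (F(x + t w') − F(x))/t`. -/
def HasSemiderivAt {E V : Type*} [NormedAddCommGroup E] [NormedSpace ℝ E]
    [NormedAddCommGroup V] [NormedSpace ℝ V]
    (F : E → V) (x w : E) (d : V) : Prop :=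
  Filter.Tendsto (fun p : ℝ × E => (p.1)⁻¹ • (F (x + p.1 • p.2) - F x))
    ((𝓝[>] (0:ℝ)) ×ˢ 𝓝 w) (𝓝 d)

/-- The Moreau envelope `e_r f(x) = inf_y { ‖x − y‖²/(2r) + f(y) }`. -/
noncomputable def moreauEnv {n : ℕ} (f : EuclideanSpace ℝ (Fin n) → EReal) (r : ℝ)
    (x : EuclideanSpace ℝ (Fin n)) : EReal :=
  ⨅ y : EuclideanSpace ℝ (Fin n), (((‖x - y‖ ^ 2 / (2 * r) : ℝ) : EReal) + f y)

lemma norm_sq_div_le_norm_sub_sq_div_add {E : Type*} [SeminormedAddCommGroup E] (u v : E)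
    {r c : ℝ} (hr : 0 < r) (hrc : r < c) :
    ‖v‖ ^ 2 / (2 * c) ≤ ‖u - v‖ ^ 2 / (2 * r) + ‖u‖ ^ 2 / (2 * (c - r)) := by
  have htri : ‖v‖ ≤ ‖u - v‖ + ‖u‖ := by
    simpa [norm_sub_rev] using norm_sub_norm_le v u
  have hcr : 0 < c - r := sub_pos.2 hrc
  have hr2 : 0 < 2 * r := by positivity
  have hcr2 : 0 < 2 * (c - r) := by positivity
  rw [div_add_div _ _ hr2.ne' hcr2.ne', div_le_div_iff₀ (by linarith) (mul_pos hr2 hcr2)]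
  -- Cauchy–Schwarz: `(d + q)² / c ≤ d² / r + q² / (c - r)`
  nlinarith [sq_nonneg ((c - r) * ‖u - v‖ - r * ‖u‖), mul_pos hr hcr,
    mul_le_mul htri htri (norm_nonneg v) (by positivity : 0 ≤ ‖u - v‖ + ‖u‖)]

section InnerProductSpace

variable {E : Type*} [NormedAddCommGroup E] [InnerProductSpace ℝ E]

lemma norm_smul_add_smul_sq (x y : E) {a b : ℝ} (hab : a + b = 1) :
    ‖a • x + b • y‖ ^ 2 = a * ‖x‖ ^ 2 + b * ‖y‖ ^ 2 - a * b * ‖x - y‖ ^ 2 := by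
  rw [norm_add_sq_real, norm_sub_sq_real, norm_smul, norm_smul, real_inner_smul_left,
    real_inner_smul_right, mul_pow, mul_pow, Real.norm_eq_abs, Real.norm_eq_abs, sq_abs, sq_abs]
  obtain rfl := eq_sub_of_add_eq hab
  ring

lemma strongConcaveOn_norm_sub_sq_div_add (p : E) (r s : ℝ) :
    StrongConcaveOn univ (-r⁻¹) fun u ↦ ‖u - p‖ ^ 2 / (2 * r) + s := by
  refine ⟨convex_univ, fun x _ y _ a b _ _ hab ↦ le_of_eq ?_⟩
  have hxy : a • x + b • y - p = a • (x - p) + b • (y - p) := by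
    calc a • x + b • y - p = a • x + b • y - (a + b) • p := by rw [hab, one_smul]
      _ = a • (x - p) + b • (y - p) := by module
  have hdiff : x - p - (y - p) = x - y := by abel
  dsimp only
  rw [hxy, norm_smul_add_smul_sq _ _ hab, hdiff, smul_eq_mul, smul_eq_mul]
  obtain rfl := eq_sub_of_add_eq hab
  ring

lemma uniformConcaveOn_of_forall_isGLB {ι : Type*} {s : Set E} {φ : ℝ → ℝ} {g : E → ℝ}
    {G : ι → E → ℝ} (hs : Convex ℝ s) (hG : ∀ i, UniformConcaveOn s φ (G i))
    (hg : ∀ x ∈ s, IsGLB (range fun i ↦ G i x) (g x)) : UniformConcaveOn s φ g := by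
  refine ⟨hs, fun x hx y hy a b ha hb hab ↦ (hg _ (hs hx hy ha hb hab)).2 ?_⟩
  rintro _ ⟨i, rfl⟩
  calc a • g x + b • g y + a * b * φ ‖x - y‖
      ≤ a • G i x + b • G i y + a * b * φ ‖x - y‖ := by
        gcongr
        exacts [(hg x hx).1 ⟨i, rfl⟩, (hg y hy).1 ⟨i, rfl⟩]
    _ ≤ G i (a • x + b • y) := (hG i).2 hx hy ha hb hab

lemma StrongConcaveOn.continuousOn [FiniteDimensional ℝ E] {s : Set E} {m : ℝ} {φ : E → ℝ}
    (hφ : StrongConcaveOn s m φ) (hs : IsOpen s) : ContinuousOn φ s := by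
  have hsum := (strongConcaveOn_iff_convex.1 hφ).continuousOn hs
  have hq : ContinuousOn (fun x : E ↦ m / 2 * ‖x‖ ^ 2) s := by fun_prop
  exact (hsum.sub hq).congr fun x _ ↦ by simp

end InnerProductSpace

section MoreauEnvelope

variable {n : ℕ} {f : EuclideanSpace ℝ (Fin n) → EReal} {r : ℝ}

lemma moreauEnv_le (u p : EuclideanSpace ℝ (Fin n)) :
    moreauEnv f r u ≤ ((‖u - p‖ ^ 2 / (2 * r) : ℝ) : EReal) + f p :=
  iInf_le (fun p ↦ ((‖u - p‖ ^ 2 / (2 * r) : ℝ) : EReal) + f p) p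

lemma moreauEnv_ne_top {p : EuclideanSpace ℝ (Fin n)} (hp : f p ≠ ⊤)
    (u : EuclideanSpace ℝ (Fin n)) : moreauEnv f r u ≠ ⊤ :=
  ne_top_of_le_ne_top (EReal.add_ne_top (EReal.coe_ne_top _) hp) (moreauEnv_le u p)

lemma le_moreauEnv (hf : ∀ p, f p ≠ ⊥) {u : EuclideanSpace ℝ (Fin n)} {β : ℝ}
    (h : ∀ p (s : ℝ), f p = s → β ≤ ‖u - p‖ ^ 2 / (2 * r) + s) : (β : EReal) ≤ moreauEnv f r u :=
  le_iInf fun p ↦ by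
    cases hp : f p using EReal.rec with
    | bot => exact absurd hp (hf p)
    | coe s => exact EReal.coe_add _ s ▸ EReal.coe_le_coe_iff.2 (h p s hp)
    | top => simp

lemma moreauEnv_ne_bot (hf : ∀ p, f p ≠ ⊥) {c : ℝ}
    (hpb : ∃ b : ℝ, ∀ z, (b : EReal) ≤ f z + ((‖z‖ ^ 2 / (2 * c) : ℝ) : EReal))
    (hr : 0 < r) (hrc : r < c) (u : EuclideanSpace ℝ (Fin n)) : moreauEnv f r u ≠ ⊥ := by
  obtain ⟨b, hb⟩ := hpb
  refine ne_bot_of_le_ne_bot (EReal.coe_ne_bot (b - ‖u‖ ^ 2 / (2 * (c - r))))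
    (le_moreauEnv hf fun p s hs ↦ ?_)
  have hbp := hb p
  rw [hs, ← EReal.coe_add, EReal.coe_le_coe_iff] at hbp
  linarith [norm_sq_div_le_norm_sub_sq_div_add u p hr hrc]

lemma isGLB_moreauEnv (hf : ∀ p, f p ≠ ⊥) {u : EuclideanSpace ℝ (Fin n)} {e : ℝ}
    (hu : moreauEnv f r u = e) :
    IsGLB (range fun p : {p // f p ≠ ⊤} ↦ ‖u - p‖ ^ 2 / (2 * r) + (f p).toReal) e := by
  constructor
  · rintro _ ⟨⟨p, hp⟩, rfl⟩
    have hle := moreauEnv_le (f := f) (r := r) u p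
    rwa [hu, ← EReal.coe_toReal hp (hf p), ← EReal.coe_add, EReal.coe_le_coe_iff] at hle
  · intro β hβ
    rw [← EReal.coe_le_coe_iff, ← hu]
    refine le_moreauEnv hf fun p s hs ↦ ?_
    simpa [hs] using hβ ⟨⟨p, by simp [hs]⟩, rfl⟩

lemma strongConcaveOn_of_moreauEnv_eq (hf : ∀ p, f p ≠ ⊥) {e : EuclideanSpace ℝ (Fin n) → ℝ}
    (he : ∀ u, moreauEnv f r u = e u) : StrongConcaveOn univ (-r⁻¹) e :=
  uniformConcaveOn_of_forall_isGLB
    (G := fun (p : {p // f p ≠ ⊤}) u ↦ ‖u - p‖ ^ 2 / (2 * r) + (f p).toReal) convex_univ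
    (fun p ↦ strongConcaveOn_norm_sub_sq_div_add p.1 r _) fun u _ ↦ isGLB_moreauEnv hf (he u)

end MoreauEnvelope

def HasDescentPropertyOn {n : ℕ} (f : EuclideanSpace ℝ (Fin n) → EReal)
    (Ω : Set (EuclideanSpace ℝ (Fin n))) (L : ℝ) : Prop :=
  ∀ x ∈ Ω, ∀ y ∈ Ω, f y ≤ f x + subderiv f x (y - x) + ((L / 2 * ‖y - x‖ ^ 2 : ℝ) : EReal)

lemma StrongConcaveOn.hasDescentPropertyOn {n : ℕ} {φ : EuclideanSpace ℝ (Fin n) → ℝ} {L : ℝ}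
    (hφ : StrongConcaveOn univ (-L) φ) : HasDescentPropertyOn (fun u ↦ (φ u : EReal)) univ L := by
  intro x _ y _
  set lower : ℝ × EuclideanSpace ℝ (Fin n) → ℝ :=
    fun q ↦ φ (x + q.2) - φ x - (1 - q.1) * (L / 2 * ‖q.2‖ ^ 2)
  have hchord : ∀ t w, 0 < t → t ≤ 1 → lower (t, w) ≤ t⁻¹ * (φ (x + t • w) - φ x) := by
    intro t w ht0 ht1
    have h := hφ.2 (mem_univ x) (mem_univ (x + w)) (sub_nonneg.2 ht1) ht0.le (sub_add_cancel 1 t)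
    have hpt : (1 - t) • x + t • (x + w) = x + t • w := by module
    rw [hpt, norm_sub_rev, add_sub_cancel_left, smul_eq_mul, smul_eq_mul] at h
    rw [le_inv_mul_iff₀ ht0]
    linear_combination h
  have hlim : Tendsto lower (𝓝[>] (0 : ℝ) ×ˢ 𝓝 (y - x)) (𝓝 (φ y - φ x - L / 2 * ‖y - x‖ ^ 2)) := by
    have hcont : Continuous lower := by
      have := continuousOn_univ.1 (hφ.continuousOn isOpen_univ)
      fun_prop
    have h0 := hcont.tendsto (0, y - x)
    simp only [lower, add_sub_cancel, sub_zero, one_mul] at h0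
    refine h0.mono_left ?_
    rw [nhds_prod_eq]
    exact prod_mono nhdsWithin_le_nhds le_rfl
  have hev : ∀ᶠ q in 𝓝[>] (0 : ℝ) ×ˢ 𝓝 (y - x), ((lower q : ℝ) : EReal) ≤
      ((q.1⁻¹ : ℝ) : EReal) * ((φ (x + q.1 • q.2) : EReal) - φ x) := by
    filter_upwards [prod_mem_prod (Ioc_mem_nhdsGT one_pos) univ_mem] with q hq
    rw [← EReal.coe_sub, ← EReal.coe_mul, EReal.coe_le_coe_iff]
    exact hchord q.1 q.2 hq.1.1 hq.1.2
  have hsub : ((φ y - φ x - L / 2 * ‖y - x‖ ^ 2 : ℝ) : EReal) ≤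
      subderiv (fun u ↦ (φ u : EReal)) x (y - x) :=
    (EReal.tendsto_coe.2 hlim).liminf_eq ▸ liminf_le_liminf hev
  calc ((φ y : ℝ) : EReal)
      = φ x + ((φ y - φ x - L / 2 * ‖y - x‖ ^ 2 : ℝ) : EReal) +
          ((L / 2 * ‖y - x‖ ^ 2 : ℝ) : EReal) := by
        norm_cast; ring
    _ ≤ _ := by gcongr

theorem moreau_envelope_descent_property_general {n : ℕ}
    (f : EuclideanSpace ℝ (Fin n) → EReal)
    -- `f` is proper, with values in ℝ ∪ {+∞}
    (hf_ne_bot : ∀ z, f z ≠ ⊥) (hproper : ∃ z, f z ≠ ⊤)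
    (c : ℝ)
    -- `f` is prox-bounded with constant `c`: `x ↦ f(x) + ‖x‖²/(2c)` is bounded below
    (hpb : ∃ b : ℝ, ∀ z, (b : EReal) ≤ f z + ((‖z‖ ^ 2 / (2 * c) : ℝ) : EReal)) :
    ∀ r : ℝ, 0 < r → r < c →
      ∀ x y : EuclideanSpace ℝ (Fin n),
        moreauEnv f r y ≤ moreauEnv f r x + subderiv (moreauEnv f r) x (y - x) +
          (((1 / (2 * r)) * ‖y - x‖ ^ 2 : ℝ) : EReal) := by
  intro r hr hrc x y
  obtain ⟨p, hp⟩ := hproper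
  have hfinite : moreauEnv f r = fun u ↦ ((moreauEnv f r u).toReal : EReal) :=
    funext fun u ↦ (EReal.coe_toReal (moreauEnv_ne_top hp u)
      (moreauEnv_ne_bot hf_ne_bot hpb hr hrc u)).symm
  rw [hfinite]
  convert (strongConcaveOn_of_moreauEnv_eq hf_ne_bot (congrFun hfinite)).hasDescentPropertyOn
    x trivial y trivial using 4
  ring

/-- if `f` is proper and prox-bounded with constant `c > 0`, then for
every `r ∈ (0, c)` the Moreau envelope `e_r f` has the descent property on `ℝⁿ` with
constant `1/r`. -/
theorem moreau_envelope_descent_property {n : ℕ}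
    (f : EuclideanSpace ℝ (Fin n) → EReal)
    -- `f` is proper, with values in ℝ ∪ {+∞}
    (hf_ne_bot : ∀ z, f z ≠ ⊥) (hproper : ∃ z, f z ≠ ⊤)
    (c : ℝ) (hc : 0 < c)
    -- `f` is prox-bounded with constant `c`: `x ↦ f(x) + ‖x‖²/(2c)` is bounded below
    (hpb : ∃ b : ℝ, ∀ z, (b : EReal) ≤ f z + ((‖z‖ ^ 2 / (2 * c) : ℝ) : EReal)) :
    ∀ r : ℝ, 0 < r → r < c →
      ∀ x y : EuclideanSpace ℝ (Fin n),
        moreauEnv f r y ≤ moreauEnv f r x + subderiv (moreauEnv f r) x (y - x) +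
          (((1 / (2 * r)) * ‖y - x‖ ^ 2 : ℝ) : EReal) :=
  moreau_envelope_descent_property_general f hf_ne_bot hproper c hpb
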